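/- arXiv:0812.2377 — 6 statements merged into one kernel-verified Lean document; each statement's English description precedes it below -/
import Mathlib

section
/- Let m be a positive integer and let D be the m×m cyclic-shift permutation matrix (with D[i][i+1 mod m] = 1 and zeros elsewhere), B = Dᵗ = D⁻¹, and U(r) the m×m matrix with all entries 1 in the r-th row and 0 elsewhere. Then det(B − I + U(r)) = (−1)^{m−1} m for every r with 1 ≤ r ≤ m. -/
/-!
Let `A = B - 1 + U(r)`. The rows of the permutation matrix `B` sum to `1`, so
`A *ᵥ 1 = m • eᵣ`. Applying `adjugate A` gives `det A • 1 = m • (column r of adjugate A)`,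
so `det A = m * det T`, where `T` is `A` with row `r` replaced by `eᵣ`. Up to a cyclic
relabelling of the indices, `T` is lower triangular with diagonal `1, -1, …, -1`.
-/

open Matrix

theorem Matrix.det_mul_eq_mul_det_updateRow_of_mulVec_eq_single {n R : Type*} [Fintype n]
    [DecidableEq n] [CommRing R] {A : Matrix n n R} {x : n → R} {r : n} {c : R}
    (h : A *ᵥ x = Pi.single r c) (k : n) :
    A.det * x k = c * (A.updateRow r (Pi.single k 1)).det := by
  have := congrFun (congrArg (· *ᵥ x) (adjugate_mul A)) k
  simp only [← mulVec_mulVec, h, smul_mulVec, one_mulVec, mulVec_single] at this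
  simpa [adjugate_apply, mul_comm c] using this.symm

section CyclicShift

variable {m : ℕ} [NeZero m] {R : Type*} [CommRing R]

variable (m R) in
def cyclicShift : Matrix (Fin m) (Fin m) R :=
  Matrix.of fun i j => if i = j + 1 then 1 else 0

theorem cyclicShift_mulVec_one : cyclicShift m R *ᵥ 1 = 1 := by
  ext i
  simp [cyclicShift, mulVec, dotProduct, eq_comm (a := i), ← eq_sub_iff_add_eq]

theorem cyclicShift_sub_one_add_mulVec_one (r : Fin m) :
    (cyclicShift m R - 1 + Matrix.of fun i _ => if i = r then 1 else 0) *ᵥ 1 =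
      Pi.single r (m : R) := by
  rw [add_mulVec, sub_mulVec, cyclicShift_mulVec_one, one_mulVec, sub_self, zero_add]
  ext i
  by_cases hi : i = r <;> simp [mulVec, dotProduct, hi]

theorem cyclicShift_sub_one_add_updateRow (r : Fin m) (v : Fin m → R) :
    (cyclicShift m R - 1 + Matrix.of fun i _ => if i = r then 1 else 0).updateRow r v =
      (cyclicShift m R - 1).updateRow r v := by
  ext i j
  by_cases hi : i = r <;> simp [hi]

theorem det_cyclicShift_sub_one_updateRow_single (r : Fin m) :
    ((cyclicShift m R - 1).updateRow r (Pi.single r 1)).det = (-1) ^ (m - 1) := by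
  obtain ⟨n, rfl⟩ := Nat.exists_eq_add_one_of_ne_zero (NeZero.ne m)
  rw [← det_submatrix_equiv_self (Equiv.addRight r), det_of_isLowerTriangular]
  · rw [Fin.prod_univ_succ]
    cases n <;> simp [cyclicShift, updateRow_apply, Fin.succ_ne_zero]
  · intro i j (hij : i < j)
    by_cases hi : i = 0
    · subst hi
      simp [updateRow_apply, hij.ne']
    have hij' : i + r ≠ j + r + 1 := by
      rw [add_right_comm, ne_eq, add_left_inj]
      rintro rfl
      rw [Fin.lt_def, Fin.val_add_one] at hij
      split_ifs at hij with hj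
      · simp [hj] at hi
      · omega
    simp [cyclicShift, updateRow_apply, hi, hij', hij.ne]

end CyclicShift

/-- `det (B − I + U(r)) = (−1)^(m−1) m` where `D` is the m×m cyclic shift matrix,
`B = Dᵗ`, and `U(r)` has all entries `1` in row `r` and `0` elsewhere. -/
theorem stmt_1 (m : ℕ) [NeZero m] (r : Fin m)
    (D : Matrix (Fin m) (Fin m) ℚ)
    (hD : D = Matrix.of fun i j => if j = i + 1 then 1 else 0)
    (B : Matrix (Fin m) (Fin m) ℚ) (hB : B = D.transpose)
    (U : Matrix (Fin m) (Fin m) ℚ)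
    (hU : U = Matrix.of fun i _ => if i = r then 1 else 0) :
    (B - 1 + U).det = (-1) ^ (m - 1) * m := by
  have hB' : B = cyclicShift m ℚ := by
    subst hB hD
    rfl
  subst hB' hU
  have key := det_mul_eq_mul_det_updateRow_of_mulVec_eq_single
    (cyclicShift_sub_one_add_mulVec_one (R := ℚ) r) r
  rw [Pi.one_apply, mul_one, cyclicShift_sub_one_add_updateRow,
    det_cyclicShift_sub_one_updateRow_single] at key
  rw [key, mul_comm]
end

section
/- Let m be a positive integer, D the m×m cyclic-shift permutation matrix, B = Dᵗ, U(r) the m×m matrix whose r-th row consists of 1's and is 0 elsewhere. Then (B − I + U(1))·(D − I + U(1)) = 2I − B − D + U(2), and consequently det(2I − B − D + U(2)) = m². -/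
/-!
Write `P` for the permutation matrix of `σ` and `U r = e_r 1ᵀ`. The product identity is an
expansion using `Pᵀ P = 1`, `U r P = U r`, `Pᵀ U r = U (σ r)` and `U r U r = U r`.
For the determinant, each factor maps the all-ones vector to `m e₀`; adding all columns to the
first one and expanding along it gives `m` times the `(0, 0)` minor. The minors of the two
factors are transposes of each other, and for the cyclic shift of size `m = n + 1` the minor is
upper triangular with diagonal `-1`, so the determinant of the product is `m² ((-1)ⁿ)² = m²`.
-/

open Matrix

lemma Fin.succ_ne_succ_add_one_of_le {n : ℕ} {i j : Fin n} (h : j ≤ i) :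
    j.succ ≠ i.succ + 1 := by
  intro heq
  have hval := congrArg Fin.val heq
  rw [Fin.val_add_one, Fin.val_succ, Fin.val_succ] at hval
  rw [Fin.le_def] at h
  split_ifs at hval
  omega

namespace Matrix

variable {n R : Type*} [DecidableEq n] [CommRing R]

lemma of_ite_eq_vecMulVec_single (r : n) :
    (of fun i (_ : n) => if i = r then (1 : R) else 0) = vecMulVec (Pi.single r 1) 1 := by
  ext i j
  simp [vecMulVec_apply, Pi.single_apply]

lemma of_ite_add_eq_permMatrix [AddGroup n] (a : n) :
    (of fun i j : n => if j = i + a then (1 : R) else 0) = (Equiv.addRight a).permMatrix R := by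
  ext i j
  simp [PEquiv.toMatrix_apply, eq_comm]

variable [Fintype n]

section PermMatrix

variable (σ : Equiv.Perm n) (r : n)

lemma transpose_permMatrix_mul_self : (σ.permMatrix R)ᵀ * σ.permMatrix R = 1 := by
  rw [transpose_permMatrix, ← permMatrix_mul, mul_inv_cancel, permMatrix_one]

lemma vecMulVec_single_one_mul_permMatrix :
    vecMulVec (Pi.single r 1) 1 * σ.permMatrix R = vecMulVec (Pi.single r 1) 1 := by
  rw [vecMulVec_mul, vecMul_permMatrix]
  rfl

lemma transpose_permMatrix_mul_vecMulVec_single_one :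
    (σ.permMatrix R)ᵀ * vecMulVec (Pi.single r 1) 1 = vecMulVec (Pi.single (σ r) 1) 1 := by
  rw [transpose_permMatrix, mul_vecMulVec, permMatrix_mulVec]
  congr 1
  ext i
  simp [Pi.single_apply, Equiv.symm_apply_eq]

lemma vecMulVec_single_one_mul_self :
    vecMulVec (Pi.single r (1 : R)) (1 : n → R) * vecMulVec (Pi.single r 1) 1 =
      vecMulVec (Pi.single r 1) 1 := by
  rw [vecMulVec_mul_vecMulVec, one_dotProduct, Finset.sum_pi_single', if_pos (Finset.mem_univ _),
    one_smul]

theorem transpose_permMatrix_sub_one_add_mul :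
    ((σ.permMatrix R)ᵀ - 1 + vecMulVec (Pi.single r 1) 1) *
        (σ.permMatrix R - 1 + vecMulVec (Pi.single r 1) 1) =
      (2 : R) • 1 - (σ.permMatrix R)ᵀ - σ.permMatrix R + vecMulVec (Pi.single (σ r) 1) 1 := by
  have expand : ∀ P U : Matrix n n R, (Pᵀ - 1 + U) * (P - 1 + U) =
      Pᵀ * P - Pᵀ + Pᵀ * U - P + 1 - U + U * P - U + U * U := by
    intros; noncomm_ring
  rw [expand, transpose_permMatrix_mul_self, vecMulVec_single_one_mul_permMatrix,
    transpose_permMatrix_mul_vecMulVec_single_one, vecMulVec_single_one_mul_self, two_smul]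
  abel

lemma permMatrix_sub_one_add_mulVec_one :
    (σ.permMatrix R - 1 + vecMulVec (Pi.single r 1) 1) *ᵥ 1 =
      (Fintype.card n : R) • Pi.single r 1 := by
  rw [add_mulVec, sub_mulVec, permMatrix_mulVec, vecMulVec_mulVec, one_mulVec, dotProduct_one,
    op_smul_eq_smul]
  simp

end PermMatrix

theorem det_eq_mul_det_submatrix_succ_of_mulVec_one {m : ℕ}
    {A : Matrix (Fin (m + 1)) (Fin (m + 1)) R} {c : R} (hA : A *ᵥ 1 = c • Pi.single 0 1) :
    A.det = c * (A.submatrix Fin.succ Fin.succ).det := by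
  have hsum : (fun k => ∑ j, (1 : Fin (m + 1) → R) j • A k j) = c • Pi.single 0 1 := by
    rw [← hA]; ext k; simp [mulVec, dotProduct]
  have hcol := det_updateCol_sum A 0 1
  rw [hsum, Pi.one_apply, one_smul] at hcol
  rw [← hcol, det_succ_column_zero, Fin.sum_univ_succ]
  have hminor := submatrix_updateCol_succAbove A (c • Pi.single 0 1) Fin.succ 0
  rw [Fin.succAbove_zero] at hminor
  simp [Fin.succ_ne_zero, hminor]

lemma submatrix_succ_add_vecMulVec_single_zero {m : ℕ} (M : Matrix (Fin (m + 1)) (Fin (m + 1)) R) :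
    (M + vecMulVec (Pi.single 0 1) 1).submatrix Fin.succ Fin.succ =
      M.submatrix Fin.succ Fin.succ := by
  ext i j
  simp [Fin.succ_ne_zero]

theorem det_permMatrix_sub_one_add_vecMulVec_single_zero {m : ℕ} (σ : Equiv.Perm (Fin (m + 1))) :
    (σ.permMatrix R - 1 + vecMulVec (Pi.single 0 1) 1).det =
      (m + 1) * ((σ.permMatrix R - 1).submatrix Fin.succ Fin.succ).det := by
  rw [det_eq_mul_det_submatrix_succ_of_mulVec_one (permMatrix_sub_one_add_mulVec_one σ 0),
    submatrix_succ_add_vecMulVec_single_zero, Fintype.card_fin, Nat.cast_succ]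

theorem det_transpose_permMatrix_sub_one_add_vecMulVec_single_zero {m : ℕ}
    (σ : Equiv.Perm (Fin (m + 1))) :
    ((σ.permMatrix R)ᵀ - 1 + vecMulVec (Pi.single 0 1) 1).det =
      (m + 1) * ((σ.permMatrix R - 1).submatrix Fin.succ Fin.succ).det := by
  rw [← det_transpose ((σ.permMatrix R - 1).submatrix _ _), transpose_submatrix, transpose_sub,
    transpose_one, transpose_permMatrix, det_permMatrix_sub_one_add_vecMulVec_single_zero]

lemma det_shift_sub_one_submatrix_succ (m : ℕ) :
    (((of fun i j : Fin (m + 1) => if j = i + 1 then (1 : R) else 0) - 1).submatrix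
      Fin.succ Fin.succ).det = (-1) ^ m := by
  rw [det_of_isUpperTriangular]
  · simp only [submatrix_apply, Matrix.sub_apply, of_apply, one_apply_eq,
      if_neg (Fin.succ_ne_succ_add_one_of_le le_rfl), zero_sub, Finset.prod_const,
      Finset.card_univ, Fintype.card_fin]
  · intro i j (hji : j < i)
    rw [submatrix_apply, Matrix.sub_apply, of_apply, if_neg (Fin.succ_ne_succ_add_one_of_le hji.le),
      one_apply_ne (Fin.succ_injective _ |>.ne hji.ne'), sub_zero]

end Matrix

/-- `(B − I + U(1))·(D − I + U(1)) = 2I − B − D + U(2)` and hence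
`det (2I − B − D + U(2)) = m²`, where `D` is the m×m cyclic shift matrix,
`B = Dᵗ`, and `U(r)` has all entries `1` in row `r` and `0` elsewhere
(rows being indexed by `Fin m`, so row 1 is index `0` and row 2 is index `1`). -/
theorem stmt_3 (m : ℕ) [NeZero m]
    (D : Matrix (Fin m) (Fin m) ℚ)
    (hD : D = Matrix.of fun i j => if j = i + 1 then 1 else 0)
    (B : Matrix (Fin m) (Fin m) ℚ) (hB : B = D.transpose)
    (U : Fin m → Matrix (Fin m) (Fin m) ℚ)
    (hU : U = fun r => Matrix.of fun i _ => if i = r then 1 else 0) :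
    (B - 1 + U 0) * (D - 1 + U 0) = (2 : ℚ) • 1 - B - D + U 1 ∧
      ((2 : ℚ) • 1 - B - D + U 1).det = (m : ℚ) ^ 2 := by
  obtain ⟨n, rfl⟩ : ∃ n, m = n + 1 := ⟨m - 1, (Nat.sub_add_cancel NeZero.one_le).symm⟩
  have hDP : D = (Equiv.addRight 1).permMatrix ℚ := hD.trans (of_ite_add_eq_permMatrix 1)
  have hU' : ∀ r, U r = vecMulVec (Pi.single r 1) 1 := fun r => hU ▸ of_ite_eq_vecMulVec_single r
  have hprod : (B - 1 + U 0) * (D - 1 + U 0) = (2 : ℚ) • 1 - B - D + U 1 := by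
    have h := transpose_permMatrix_sub_one_add_mul (R := ℚ) (Equiv.addRight (1 : Fin (n + 1))) 0
    simp only [Equiv.coe_addRight, zero_add] at h
    rwa [← hDP, ← hB, ← hU', ← hU'] at h
  refine ⟨hprod, ?_⟩
  rw [← hprod, det_mul, hB, hDP, hU', det_permMatrix_sub_one_add_vecMulVec_single_zero,
    det_transpose_permMatrix_sub_one_add_vecMulVec_single_zero, ← hDP, hD,
    det_shift_sub_one_submatrix_succ, mul_mul_mul_comm, ← mul_pow, neg_one_mul, neg_neg, one_pow]
  push_cast
  ring
end

section
/- In the setting of the previous lemma, one has χ(L) ∩ ρ(M') = (χ∘φ)(M) inside L'. -/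
/-!
An element of `χ(L) ∩ ρ(M')` is `χ l = ρ m'`. Since `M' / ψ(M)` is torsion, some `n • m'` with
`n > 0` equals `ψ m`, so `χ (n • l) = ρ (ψ m) = χ (φ m)` and injectivity of `χ` gives
`n • l = φ m`. As `L / φ(M)` is torsion-free, `l` itself lies in `φ(M)`.
-/

namespace QuotientAddGroup

variable {G : Type*} [AddGroup G] {H : AddSubgroup G} [H.Normal]

theorem exists_nsmul_mem_of_isTorsion (hH : IsAddTorsion (G ⧸ H)) (x : G) :
    ∃ n, 0 < n ∧ n • x ∈ H := by
  obtain ⟨n, hn, hnx⟩ := (hH (x : G ⧸ H)).exists_nsmul_eq_zero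
  rw [← mk_nsmul, eq_zero_iff] at hnx
  exact ⟨n, hn, hnx⟩

theorem mem_of_nsmul_mem_of_torsionFree (hH : ∀ g : G ⧸ H, g ≠ 0 → ¬IsOfFinAddOrder g)
    {n : ℕ} (hn : 0 < n) {x : G} (hnx : n • x ∈ H) : x ∈ H := by
  rw [← eq_zero_iff, mk_nsmul] at hnx
  rw [← eq_zero_iff]
  by_contra hx
  exact hH _ hx (isOfFinAddOrder_iff_nsmul_eq_zero.mpr ⟨n, hn, hnx⟩)

end QuotientAddGroup

open QuotientAddGroup in
theorem stmt_7_general {M M' L L' : Type*} [AddCommGroup M] [AddCommGroup M']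
    [AddCommGroup L] [AddCommGroup L']
    (φ : M →+ L) (ψ : M →+ M') (ρ : M' →+ L') (χ : L →+ L')
    (hcomm : χ.comp φ = ρ.comp ψ)
    (hχ : Function.Injective χ)
    (htf : ∀ g : L ⧸ φ.range, g ≠ 0 → ¬IsOfFinAddOrder g)
    (ht : AddMonoid.IsTorsion (M' ⧸ ψ.range)) :
    χ.range ⊓ ρ.range = (χ.comp φ).range := by
  have hcomm_apply (m : M) : χ (φ m) = ρ (ψ m) := DFunLike.congr_fun hcomm m
  refine le_antisymm ?_ ?_
  · rintro _ ⟨⟨l, rfl⟩, m', hm'⟩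
    obtain ⟨n, hn, m, hm⟩ := exists_nsmul_mem_of_isTorsion ht m'
    have hnl : n • l = φ m := hχ <| calc
      χ (n • l) = ρ (n • m') := by rw [map_nsmul, map_nsmul, hm']
      _ = χ (φ m) := by rw [hcomm_apply, hm]
    obtain ⟨m₀, rfl⟩ := mem_of_nsmul_mem_of_torsionFree htf hn ⟨m, hnl.symm⟩
    exact ⟨m₀, rfl⟩
  · rintro _ ⟨m, rfl⟩
    exact ⟨⟨φ m, rfl⟩, ψ m, (hcomm_apply m).symm⟩

/-- In the setting of the previous lemma, `χ(L) ∩ ρ(M') = (χ∘φ)(M)` inside `L'`. -/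
theorem stmt_7 {M M' L L' : Type*} [AddCommGroup M] [AddCommGroup M']
    [AddCommGroup L] [AddCommGroup L']
    (φ : M →+ L) (ψ : M →+ M') (ρ : M' →+ L') (χ : L →+ L')
    (hcomm : χ.comp φ = ρ.comp ψ)
    (hχ : Function.Injective χ) (hρ : Function.Injective ρ)
    (htf : ∀ g : L ⧸ φ.range, g ≠ 0 → ¬IsOfFinAddOrder g)
    (ht : AddMonoid.IsTorsion (M' ⧸ ψ.range)) :
    χ.range ⊓ ρ.range = (χ.comp φ).range :=
  stmt_7_general φ ψ ρ χ hcomm hχ htf ht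
end

section
/- Let ρ : M → L' be an injective homomorphism of nondegenerate integral lattices. Suppose that for every prime ℓ dividing disc(M), there is a sublattice L(ℓ) of L' containing ρ(M) such that the composition M⊗𝔽_ℓ → L(ℓ)⊗𝔽_ℓ → (L(ℓ)⊗𝔽_ℓ)* (reduction of ρ followed by the map induced by the pairing) is injective. Then ρ(M) is primitively contained in L', i.e., L'/ρ(M) is torsion-free. -/
/-!
Multiplication by `n ≠ 0` factors into primes, so it suffices to show that `p • y = ρ x` forces
`x ∈ p M` for every prime `p`. For such `x`, `BL (ρ x) z = p * BL y z` vanishes modulo `p` for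
all `z ∈ L'`. If `p ∣ disc M` this is exactly what the hypothesis on `L(p)` excludes unless
`x ∈ p M`. Otherwise the Gram matrix `G` of `BM` is invertible modulo `p`, and the coordinates
`c` of `x` satisfy `c G ≡ 0`, hence `c ≡ 0 (mod p)`. Finally `p • (y - ρ x') = 0` gives
`y = ρ x'` because `L'` is torsion-free.
-/

open Matrix

theorem AddSubgroup.mem_of_zsmul_mem_of_forall_prime {G : Type*} [AddCommGroup G]
    (N : AddSubgroup G) (hN : ∀ p : ℕ, p.Prime → ∀ y : G, (p : ℤ) • y ∈ N → y ∈ N)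
    {n : ℤ} (hn : n ≠ 0) {y : G} (hy : n • y ∈ N) : y ∈ N := by
  have hnat : ∀ k : ℕ, k ≠ 0 → ∀ y : G, (k : ℤ) • y ∈ N → y ∈ N := by
    refine induction_on_primes (by simp) (by simp) fun p k hp ih hpk y hy => ?_
    rw [Nat.cast_mul, mul_zsmul] at hy
    exact ih (right_ne_zero_of_mul hpk) y (hN p hp _ hy)
  obtain ⟨c, hc⟩ : n ∣ (n.natAbs : ℤ) := Int.dvd_natAbs.mpr dvd_rfl
  refine hnat n.natAbs (Int.natAbs_ne_zero.mpr hn) y ?_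
  rw [hc, mul_comm, mul_zsmul]
  exact N.zsmul_mem hy c

theorem Matrix.dvd_of_forall_dvd_vecMul {R ι : Type*} [CommRing R] [Fintype ι] [DecidableEq ι]
    {p : R} (hp : Prime p) {A : Matrix ι ι R} (hA : ¬ p ∣ A.det) {v : ι → R}
    (hv : ∀ j, p ∣ (v ᵥ* A) j) (i : ι) : p ∣ v i := by
  have hadj : A.det • v = v ᵥ* A ᵥ* A.adjugate := by
    rw [vecMul_vecMul, mul_adjugate, vecMul_smul, vecMul_one]
  have hdvd : p ∣ A.det * v i := by
    rw [← smul_eq_mul, ← Pi.smul_apply, hadj]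
    exact Finset.dvd_sum fun j _ => dvd_mul_of_dvd_left (hv j) _
  exact (hp.dvd_or_dvd hdvd).resolve_left hA

theorem Module.Basis.exists_eq_smul_of_forall_dvd_repr {R M ι : Type*} [CommRing R]
    [AddCommGroup M] [Module R M] [Fintype ι] (b : Module.Basis ι R M) {n : R} {x : M}
    (h : ∀ i, n ∣ b.repr x i) : ∃ x', x = n • x' := by
  choose c hc using h
  refine ⟨b.equivFun.symm c, b.equivFun.injective ?_⟩
  rw [map_smul, LinearEquiv.apply_symm_apply]
  ext i
  simp [hc]

namespace LinearMap

variable {R M ι : Type*} [CommRing R] [AddCommGroup M] [Module R M] [Fintype ι]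

theorem apply_basis_eq_vecMul (B : M →ₗ[R] M →ₗ[R] R) (b : Module.Basis ι R M) (x : M) (j : ι) :
    B x (b j) = (b.repr x ᵥ* of fun i j => B (b i) (b j)) j := by
  conv_lhs => rw [← b.sum_repr x]
  simp only [map_sum, map_smul, coe_sum, Finset.sum_apply, smul_apply, smul_eq_mul, vecMul,
    dotProduct, of_apply]

theorem exists_eq_smul_of_forall_dvd_apply_basis [DecidableEq ι] (B : M →ₗ[R] M →ₗ[R] R)
    (b : Module.Basis ι R M) {p : R} (hp : Prime p)
    (hdet : ¬ p ∣ (of fun i j => B (b i) (b j)).det) {x : M} (hx : ∀ j, p ∣ B x (b j)) :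
    ∃ x', x = p • x' :=
  b.exists_eq_smul_of_forall_dvd_repr
    (dvd_of_forall_dvd_vecMul hp hdet fun j => apply_basis_eq_vecMul B b x j ▸ hx j)

end LinearMap

theorem mem_range_of_prime_zsmul_mem_range {M L' ι : Type*} [AddCommGroup M] [Module ℤ M]
    [AddCommGroup L'] [Module ℤ L'] [Module.Free ℤ L'] [Fintype ι] [DecidableEq ι]
    (BM : M →ₗ[ℤ] M →ₗ[ℤ] ℤ) (BL : L' →ₗ[ℤ] L' →ₗ[ℤ] ℤ) (ρ : M →ₗ[ℤ] L')
    (hcompat : ∀ x y, BL (ρ x) (ρ y) = BM x y) (bM : Module.Basis ι ℤ M) {p : ℕ}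
    (hp : p.Prime)
    (hdisc : (p : ℤ) ∣ (of fun i j => BM (bM i) (bM j)).det →
      ∀ x : M, (∀ z, (p : ℤ) ∣ BL (ρ x) z) → ∃ x' : M, x = (p : ℤ) • x')
    {y : L'} (hy : (p : ℤ) • y ∈ LinearMap.range ρ) : y ∈ LinearMap.range ρ := by
  obtain ⟨x, hx⟩ := hy
  -- `Module ℤ` instances are not reducibly the `zsmul` of `AddCommGroup`; `int_smul_eq_zsmul`
  -- bridges the two below.
  have hdvd : ∀ z, (p : ℤ) ∣ BL (ρ x) z := fun z => ⟨BL y z, by simp [hx]⟩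
  obtain ⟨x', rfl⟩ : ∃ x' : M, x = (p : ℤ) • x' := by
    by_cases hdet : (p : ℤ) ∣ (of fun i j => BM (bM i) (bM j)).det
    · exact hdisc hdet x hdvd
    · obtain ⟨x', hx'⟩ := BM.exists_eq_smul_of_forall_dvd_apply_basis bM
        (Nat.prime_iff_prime_int.mp hp) hdet fun j => hcompat x (bM j) ▸ hdvd (ρ (bM j))
      exact ⟨x', hx'.trans (int_smul_eq_zsmul _ _ _)⟩
  refine ⟨x', smul_right_injective L' (Int.natCast_ne_zero.mpr hp.ne_zero) ?_⟩
  exact (int_smul_eq_zsmul _ _ _).trans ((map_zsmul ρ _ _).symm.trans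
    (hx.trans (int_smul_eq_zsmul _ _ _).symm))

theorem stmt_9_general {M L' : Type*} [AddCommGroup M] [Module ℤ M]
    [AddCommGroup L'] [Module ℤ L'] [Module.Free ℤ L']
    (BM : M →ₗ[ℤ] M →ₗ[ℤ] ℤ) (BL : L' →ₗ[ℤ] L' →ₗ[ℤ] ℤ)
    (ρ : M →ₗ[ℤ] L')
    (hcompat : ∀ x y, BL (ρ x) (ρ y) = BM x y)
    {ι : Type*} [Fintype ι] [DecidableEq ι] (bM : Module.Basis ι ℤ M)
    (hL : ∀ ℓ : ℕ, ℓ.Prime →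
      (ℓ : ℤ) ∣ (Matrix.of fun i j => BM (bM i) (bM j)).det →
      ∃ L : Submodule ℤ L', LinearMap.range ρ ≤ L ∧
        ∀ x : M, (∀ y ∈ L, (ℓ : ℤ) ∣ BL (ρ x) y) →
          ∃ x' : M, x = (ℓ : ℤ) • x') :
    ∀ (y : L') (n : ℤ), n ≠ 0 → n • y ∈ LinearMap.range ρ →
      y ∈ LinearMap.range ρ := by
  intro y n hn hy
  refine (LinearMap.range ρ).toAddSubgroup.mem_of_zsmul_mem_of_forall_prime
    (fun p hp z hz => ?_) hn hy
  refine mem_range_of_prime_zsmul_mem_range BM BL ρ hcompat bM hp (fun hdet x hx => ?_) hz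
  obtain ⟨L, -, hLx⟩ := hL p hp hdet
  exact hLx x fun z _ => hx z

/-- Let `ρ : M → L'` be an injective homomorphism of nondegenerate integral
lattices. Suppose for every prime `ℓ` dividing `disc M` there is a sublattice
`L(ℓ)` of `L'` containing `ρ(M)` such that the induced map
`M ⊗ 𝔽_ℓ → (L(ℓ) ⊗ 𝔽_ℓ)*` is injective (expressed elementwise: any `x ∈ M`
pairing to `0 mod ℓ` with every element of `L(ℓ)` is divisible by `ℓ` in `M`).
Then `ρ(M)` is primitively contained in `L'`, i.e. `L'/ρ(M)` is torsion-free. -/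
theorem stmt_9 {M L' : Type*} [AddCommGroup M] [Module ℤ M]
    [Module.Free ℤ M] [Module.Finite ℤ M]
    [AddCommGroup L'] [Module ℤ L'] [Module.Free ℤ L'] [Module.Finite ℤ L']
    (BM : M →ₗ[ℤ] M →ₗ[ℤ] ℤ) (BL : L' →ₗ[ℤ] L' →ₗ[ℤ] ℤ)
    (hMsymm : ∀ x y, BM x y = BM y x) (hLsymm : ∀ x y, BL x y = BL y x)
    (hMnd : Function.Injective BM) (hLnd : Function.Injective BL)
    (ρ : M →ₗ[ℤ] L') (hρ : Function.Injective ρ)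
    (hcompat : ∀ x y, BL (ρ x) (ρ y) = BM x y)
    {ι : Type*} [Fintype ι] [DecidableEq ι] (bM : Module.Basis ι ℤ M)
    (hL : ∀ ℓ : ℕ, ℓ.Prime →
      (ℓ : ℤ) ∣ (Matrix.of fun i j => BM (bM i) (bM j)).det →
      ∃ L : Submodule ℤ L', LinearMap.range ρ ≤ L ∧
        ∀ x : M, (∀ y ∈ L, (ℓ : ℤ) ∣ BL (ρ x) y) →
          ∃ x' : M, x = (ℓ : ℤ) • x') :
    ∀ (y : L') (n : ℤ), n ≠ 0 → n • y ∈ LinearMap.range ρ →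
      y ∈ LinearMap.range ρ :=
  stmt_9_general BM BL ρ hcompat bM hL
end

section
/- Suppose ρ : M' → L' is an injective homomorphism of nondegenerate integral lattices and M is a finite-index sublattice of M'. If for each prime ℓ dividing disc(M) there is a sublattice L(ℓ) of L' containing ρ(M) such that the induced map M⊗𝔽_ℓ → (L(ℓ)⊗𝔽_ℓ)* is injective, then M = M'. -/
/-!
Were `M ≠ M'`, the finite group `M' ⧸ M` would contain an element of prime order `ℓ`, i.e. some
`x ∉ M` with `ℓ • x ∈ M`; as `M'` is torsion-free it suffices to show that `ℓ • x` is divisible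
by `ℓ` inside `M`. If `ℓ ∣ disc M` this is the hypothesis on `L(ℓ)`, since `ρ (ℓ • x)` pairs to
`0 mod ℓ` with all of `L'`. Otherwise the Gram matrix of `M` is invertible mod `ℓ`, so the
coordinates of `ℓ • x`, whose pairings with the basis of `M` all vanish mod `ℓ`, vanish mod `ℓ`.
-/

theorem Submodule.exists_prime_smul_mem_of_ne_top {N : Type*} [AddCommGroup N] [Module ℤ N]
    {M : Submodule ℤ N} [Finite (N ⧸ M)] (hM : M ≠ ⊤) :
    ∃ ℓ : ℕ, ℓ.Prime ∧ ∃ x ∉ M, (ℓ : ℤ) • x ∈ M := by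
  have : Nontrivial (N ⧸ M) := (Submodule.Quotient.nontrivial_iff (p := M)).mpr hM
  obtain ⟨ℓ, hℓ, hℓ_dvd⟩ := Nat.exists_prime_and_dvd (Finite.one_lt_card (α := N ⧸ M)).ne'
  have : Fact ℓ.Prime := ⟨hℓ⟩
  obtain ⟨q, hq⟩ := exists_prime_addOrderOf_dvd_card' ℓ hℓ_dvd
  obtain ⟨x, rfl⟩ := Submodule.Quotient.mk_surjective M q
  refine ⟨ℓ, hℓ, x, fun hx => ?_, ?_⟩
  · rw [(Submodule.Quotient.mk_eq_zero M).mpr hx, addOrderOf_zero] at hq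
    exact hℓ.one_lt.ne hq
  · rw [← Submodule.Quotient.mk_eq_zero, Submodule.Quotient.mk_smul, natCast_zsmul, ← hq,
      addOrderOf_nsmul_eq_zero]

namespace Matrix

theorem dvd_of_dvd_vecMul {ι : Type*} [Fintype ι] [DecidableEq ι] {ℓ : ℕ}
    (hℓ : ℓ.Prime) {G : Matrix ι ι ℤ} (hG : ¬ (ℓ : ℤ) ∣ G.det) {c : ι → ℤ}
    (hc : ∀ j, (ℓ : ℤ) ∣ (c ᵥ* G) j) (i : ι) : (ℓ : ℤ) ∣ c i := by
  have : Fact ℓ.Prime := ⟨hℓ⟩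
  let red : ℤ →+* ZMod ℓ := Int.castRingHom (ZMod ℓ)
  have hdet : (G.map red).det ≠ 0 := by
    rwa [← RingHom.mapMatrix_apply, ← RingHom.map_det, ne_eq, eq_intCast,
      ZMod.intCast_zmod_eq_zero_iff_dvd]
  have hvecMul : (red ∘ c) ᵥ* G.map red = 0 := by
    funext j
    rw [← RingHom.map_vecMul, Pi.zero_apply, eq_intCast, ZMod.intCast_zmod_eq_zero_iff_dvd]
    exact hc j
  exact (ZMod.intCast_zmod_eq_zero_iff_dvd _ _).mp
    (congrFun (eq_zero_of_vecMul_eq_zero hdet hvecMul) i)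

end Matrix

open Matrix in
theorem Submodule.exists_eq_smul_of_dvd_apply_basis {N ι : Type*} [AddCommGroup N] [Module ℤ N]
    [Fintype ι] [DecidableEq ι] {M : Submodule ℤ N} (b : Module.Basis ι ℤ M)
    (B : N →ₗ[ℤ] N →ₗ[ℤ] ℤ) {ℓ : ℕ} (hℓ : ℓ.Prime)
    (hB : ¬ (ℓ : ℤ) ∣ (Matrix.of fun i j => B (b i : N) (b j : N)).det) {n : N} (hn : n ∈ M)
    (hdvd : ∀ j, (ℓ : ℤ) ∣ B n (b j)) : ∃ n' ∈ M, n = (ℓ : ℤ) • n' := by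
  set c := b.equivFun ⟨n, hn⟩
  have hvecMul : ∀ j, (c ᵥ* Matrix.of fun i j => B (b i : N) (b j : N)) j = B n (b j) := by
    intro j
    have hn_eq : ∑ i, c i • (b i : N) = n :=
      (map_sum M.subtype _ _).symm.trans (congrArg M.subtype (b.sum_equivFun _))
    simp [← hn_eq, vecMul, dotProduct]
  choose d hd using dvd_of_dvd_vecMul hℓ hB (fun j => (hvecMul j).symm ▸ hdvd j)
  have hn_smul : (⟨n, hn⟩ : M) = (ℓ : ℤ) • b.equivFun.symm d := by
    refine b.equivFun.injective ?_
    rw [map_zsmul, LinearEquiv.apply_symm_apply]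
    exact funext hd
  exact ⟨_, (b.equivFun.symm d).2, congrArg Subtype.val hn_smul⟩

theorem stmt_10_general {M' L' : Type*} [AddCommGroup M'] [Module ℤ M']
    [Module.Free ℤ M']
    [AddCommGroup L'] [Module ℤ L']
    (BM : M' →ₗ[ℤ] M' →ₗ[ℤ] ℤ) (BL : L' →ₗ[ℤ] L' →ₗ[ℤ] ℤ)
    (ρ : M' →ₗ[ℤ] L')
    (M : Submodule ℤ M') (hfin : Finite (M' ⧸ M))
    {ι : Type*} [Fintype ι] [DecidableEq ι] (bM : Module.Basis ι ℤ M)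
    (hL : ∀ ℓ : ℕ, ℓ.Prime →
      (ℓ : ℤ) ∣ (Matrix.of fun i j => BM (bM i : M') (bM j : M')).det →
      ∃ L : Submodule ℤ L', M.map ρ ≤ L ∧
        ∀ x ∈ M, (∀ y ∈ L, (ℓ : ℤ) ∣ BL (ρ x) y) →
          ∃ x' ∈ M, x = (ℓ : ℤ) • x') :
    M = ⊤ := by
  by_contra hne
  obtain ⟨ℓ, hℓ, x, hxM, hℓx⟩ := M.exists_prime_smul_mem_of_ne_top hne
  suffices ∃ x' ∈ M, (ℓ : ℤ) • x = (ℓ : ℤ) • x' by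
    obtain ⟨x', hx'M, hx'⟩ := this
    have hℓ0 : (ℓ : ℤ) ≠ 0 := Int.natCast_ne_zero.mpr hℓ.ne_zero
    -- `•` is the group's `zsmul`; cancelling `ℓ` needs the `Module ℤ M'` action of `Module.Free`.
    rw [← Int.cast_smul_eq_zsmul ℤ, ← Int.cast_smul_eq_zsmul ℤ, Int.cast_id,
      smul_right_inj hℓ0] at hx'
    exact hxM (hx' ▸ hx'M)
  by_cases hdisc : (ℓ : ℤ) ∣ (Matrix.of fun i j => BM (bM i : M') (bM j : M')).det
  · obtain ⟨L, -, hdiv⟩ := hL ℓ hℓ hdisc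
    exact hdiv _ hℓx fun y _ => by simp
  · exact M.exists_eq_smul_of_dvd_apply_basis bM BM hℓ hdisc hℓx fun j => by simp

/-- Suppose `ρ : M' → L'` is an injective homomorphism of nondegenerate integral
lattices and `M` is a finite-index sublattice of `M'`. If for each prime `ℓ`
dividing `disc M` there is a sublattice `L(ℓ)` of `L'` containing `ρ(M)` such that
the induced map `M ⊗ 𝔽_ℓ → (L(ℓ) ⊗ 𝔽_ℓ)*` is injective (expressed elementwise:
any `x ∈ M` pairing to `0 mod ℓ` with every element of `L(ℓ)` is divisible by `ℓ`
in `M`), then `M = M'`. -/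
theorem stmt_10 {M' L' : Type*} [AddCommGroup M'] [Module ℤ M']
    [Module.Free ℤ M'] [Module.Finite ℤ M']
    [AddCommGroup L'] [Module ℤ L'] [Module.Free ℤ L'] [Module.Finite ℤ L']
    (BM : M' →ₗ[ℤ] M' →ₗ[ℤ] ℤ) (BL : L' →ₗ[ℤ] L' →ₗ[ℤ] ℤ)
    (hMsymm : ∀ x y, BM x y = BM y x) (hLsymm : ∀ x y, BL x y = BL y x)
    (hMnd : Function.Injective BM) (hLnd : Function.Injective BL)
    (ρ : M' →ₗ[ℤ] L') (hρ : Function.Injective ρ)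
    (hcompat : ∀ x y, BL (ρ x) (ρ y) = BM x y)
    (M : Submodule ℤ M') (hfin : Finite (M' ⧸ M))
    {ι : Type*} [Fintype ι] [DecidableEq ι] (bM : Module.Basis ι ℤ M)
    (hL : ∀ ℓ : ℕ, ℓ.Prime →
      (ℓ : ℤ) ∣ (Matrix.of fun i j => BM (bM i : M') (bM j : M')).det →
      ∃ L : Submodule ℤ L', M.map ρ ≤ L ∧
        ∀ x ∈ M, (∀ y ∈ L, (ℓ : ℤ) ∣ BL (ρ x) y) →
          ∃ x' ∈ M, x = (ℓ : ℤ) • x') :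
    M = ⊤ :=
  stmt_10_general BM BL ρ M hfin bM hL
end

section
/- Let q = pⁿ be a prime power and m = q+1. Let α ∈ 𝔽_q* with α² ≠ −1 and β ∈ 𝔽_{q²} satisfy β² = 1 + α² and β^{m−2} = −1. Then the line {[λ : αλ+βμ : βλ+αμ : μ] : [λ:μ] ∈ ℙ¹} lies on the Fermat surface x₀^m + x₁^m + x₂^m + x₃^m = 0 over 𝔽̄_p; that is, for all λ, μ ∈ 𝔽̄_p, λ^m + (αλ+βμ)^m + (βλ+αμ)^m + μ^m = 0. -/
/-- Let `q = pⁿ` be a prime power, `m = q + 1`. Let `α ∈ 𝔽_q*` (i.e.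
`α^(q−1) = 1` in `𝔽̄_p`) with `α² ≠ −1`, and let `β` satisfy `β² = 1 + α²` and
`β^(m−2) = −1`. Then the line `{[λ : αλ+βμ : βλ+αμ : μ]}` lies on the Fermat
surface of degree `m` over `𝔽̄_p`. -/
theorem stmt_19 (p n : ℕ) [Fact p.Prime] (hn : 0 < n) (q m : ℕ)
    (hq : q = p ^ n) (hm : m = q + 1)
    (α β : AlgebraicClosure (ZMod p))
    (hα : α ^ (q - 1) = 1) (hα2 : α ^ 2 ≠ -1)
    (hβ : β ^ 2 = 1 + α ^ 2) (hβm : β ^ (m - 2) = -1) :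
    ∀ lam mu : AlgebraicClosure (ZMod p),
      lam ^ m + (α * lam + β * mu) ^ m + (β * lam + α * mu) ^ m + mu ^ m = 0 := by
  intro lam mu
  have hp : p.Prime := Fact.out
  have hq1 : 1 ≤ q := by
    subst hq; exact Nat.one_le_pow _ _ hp.pos
  have hqsub : q - 1 + 1 = q := Nat.sub_add_cancel hq1
  have hm2 : m - 2 = q - 1 := by omega
  have frob : ∀ x y : AlgebraicClosure (ZMod p), (x + y) ^ q = x ^ q + y ^ q := by
    intro x y
    subst hq
    exact add_pow_char_pow (x := x) (y := y) p n
  have hαq : α ^ q = α := by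
    rw [← hqsub, pow_succ, hα, one_mul]
  have hβq : β ^ q = -β := by
    rw [← hqsub, pow_succ, ← hm2, hβm, neg_one_mul]
  have hpow : ∀ x : AlgebraicClosure (ZMod p), x ^ m = x ^ q * x := by
    intro x; rw [hm, pow_succ]
  rw [hpow, hpow, hpow, hpow, frob, frob, mul_pow, mul_pow, mul_pow, mul_pow,
    hαq, hβq]
  linear_combination (-(lam ^ q * lam) - mu ^ q * mu) * hβ
end
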